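/- Sparse approximation of Mx under columnwise cone structure and a compatibility condition (Lemma D.1(c)): let d ≥ 1, M ∈ ℝ^{d×d}, J ⊆ {1,…,d} nonempty, ϑ ≥ 0 and ϑ_x ≥ 0; suppose every column M_{·,k} (k = 1,…,d) belongs to the cone C₁(J,ϑ), and let x ∈ ℝ^d be a nonzero vector in C₁(J,ϑ_x). Define the compatibility constant κ_min(J,ϑ_x) := inf{√(|J|)·‖(Mu)_J‖₂/‖u_J‖₁ : u ∈ C₁(J,ϑ_x), u_J ≠ 0} and suppose κ_min(J,ϑ_x) > 0. Set K_{J,x} := (1+ϑ_x)·max_{1≤k≤d} √(|J|)·‖M_{J,k}‖₁/κ_min(J,ϑ_x). Then Mx ∈ C₁(J, (1+ϑ)·K_{J,x}), and for every integer s ≥ 1 there exists ℓ̃ ∈ ℝ^d with at most s nonzero coordinates such that ‖ℓ̃ − Mx‖₂ ≤ ((1 + (1+ϑ)·K_{J,x})/2)·√(|J|/s)·‖Mx‖₂. -/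

import Mathlib

open MeasureTheory ProbabilityTheory Filter Finset Asymptotics
open scoped ENNReal NNReal Topology Classical

noncomputable section

/-- Euclidean dot product on `ℝ^m`. -/
def dot {m : ℕ} (u v : Fin m → ℝ) : ℝ := ∑ j, u j * v j

/-- ℓ¹-norm on `ℝ^m`. -/
def l1 {m : ℕ} (v : Fin m → ℝ) : ℝ := ∑ j, |v j|

/-- ℓ²-norm on `ℝ^m`. -/
def l2 {m : ℕ} (v : Fin m → ℝ) : ℝ := Real.sqrt (∑ j, v j ^ 2)

/-- max-norm on `ℝ^m`. -/
def linf {m : ℕ} (v : Fin m → ℝ) : ℝ := ⨆ j, |v j|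

/-- number of nonzero coordinates. -/
def l0 {m : ℕ} (v : Fin m → ℝ) : ℕ := (Finset.univ.filter fun j => v j ≠ 0).card

/-- coordinate restriction of a vector to an index set. -/
def restr {m : ℕ} (S : Finset (Fin m)) (v : Fin m → ℝ) : Fin m → ℝ :=
  fun j => if j ∈ S then v j else 0

/-- cone of dominant coordinates w.r.t. the ℓ¹-norm. -/
def cone1 {m : ℕ} (S : Finset (Fin m)) (t : ℝ) : Set (Fin m → ℝ) :=
  {v | l1 (restr Sᶜ v) ≤ t * l1 (restr S v)}

/-- cone of dominant coordinates w.r.t. the ℓ²-norm. -/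
def cone2 {m : ℕ} (S : Finset (Fin m)) (t : ℝ) : Set (Fin m → ℝ) :=
  {v | l2 (restr Sᶜ v) ≤ t * l2 (restr S v)}

/-- ψ_a-Orlicz norm of a real random variable (with `sInf ∅ = ∞`). -/
def psiNorm {Ω : Type*} [MeasurableSpace Ω] (a : ℝ) (μ : Measure Ω) (Z : Ω → ℝ) : ℝ≥0∞ :=
  sInf {t : ℝ≥0∞ | 0 < t ∧ t ≠ ∞ ∧
    ∫⁻ ω, ENNReal.ofReal (Real.exp (|Z ω| ^ a / t.toReal ^ a)) ∂μ ≤ 2}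

/-- sub-Gaussian random vector with constant `K`. -/
def SubGaussian {Ω : Type*} [MeasurableSpace Ω] {m : ℕ} (μ : Measure Ω)
    (X : Ω → Fin m → ℝ) (K : ℝ) : Prop :=
  ∀ u : Fin m → ℝ,
    psiNorm 2 μ (fun ω => dot u (X ω)) ≤
      ENNReal.ofReal (K * Real.sqrt (∫ ω, dot u (X ω) ^ 2 ∂μ))

/-- `s`-sparse maximum eigenvalue of `E[X Xᵀ]`. -/
def sparseEig {Ω : Type*} [MeasurableSpace Ω] {m : ℕ} (μ : Measure Ω)
    (X : Ω → Fin m → ℝ) (s : ℕ) : ℝ :=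
  sSup {r : ℝ | ∃ u : Fin m → ℝ, l2 u = 1 ∧ l0 u ≤ s ∧ r = ∫ ω, dot (X ω) u ^ 2 ∂μ}

/-- complete-case population gram matrix `E[R X Xᵀ]`. -/
def gramCC {Ω : Type*} [MeasurableSpace Ω] {m : ℕ} (μ : Measure Ω)
    (R : Ω → ℝ) (X : Ω → Fin m → ℝ) : Matrix (Fin m) (Fin m) ℝ :=
  Matrix.of fun j k => ∫ ω, R ω * X ω j * X ω k ∂μ
/-! Columns of `M` in the cone `C₁(J, ϑ)` make the off-`J` mass of `Mx` at most `ϑ` times a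
weighted column mass of `x`; the compatibility constant turns `‖x‖₁ ≤ (1 + ϑₓ)‖x_J‖₁` into a bound
by `‖(Mx)_J‖₂`, so `Mx` lies in the cone `C₁(J, ϑ K_{J,x})`. A vector `v ∈ C₁(J, t)` has
`‖v‖₁ ≤ (1 + t)√|J| ‖v‖₂`, and keeping its `s` largest coordinates leaves an `ℓ²`-error of at most
`‖v‖₁ / (2√s)`: if `α` is the smallest kept magnitude, the tail is at most `α (‖v‖₁ - sα)`. -/

section Norms

variable {m : ℕ}

lemma l1_nonneg (v : Fin m → ℝ) : 0 ≤ l1 v :=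
  Finset.sum_nonneg fun _ _ => abs_nonneg _

lemma l2_nonneg (v : Fin m → ℝ) : 0 ≤ l2 v := Real.sqrt_nonneg _

lemma l2_le_l1 (v : Fin m → ℝ) : l2 v ≤ l1 v := by
  have hsq : ∑ j, |v j| ^ 2 ≤ (∑ j, |v j|) ^ 2 :=
    Finset.sum_sq_le_sq_sum_of_nonneg fun _ _ => abs_nonneg _
  calc l2 v = Real.sqrt (∑ j, |v j| ^ 2) := by simp only [l2, sq_abs]
    _ ≤ Real.sqrt ((∑ j, |v j|) ^ 2) := Real.sqrt_le_sqrt hsq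
    _ = l1 v := Real.sqrt_sq (l1_nonneg v)

lemma l1_restr (S : Finset (Fin m)) (v : Fin m → ℝ) : l1 (restr S v) = ∑ j ∈ S, |v j| := by
  simp [l1, restr, apply_ite, Finset.sum_ite_mem]

lemma l2_restr (S : Finset (Fin m)) (v : Fin m → ℝ) :
    l2 (restr S v) = Real.sqrt (∑ j ∈ S, v j ^ 2) := by
  simp [l2, restr, Finset.sum_ite_mem]

lemma l1_restr_add_l1_restr_compl (S : Finset (Fin m)) (v : Fin m → ℝ) :
    l1 (restr S v) + l1 (restr Sᶜ v) = l1 v := by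
  rw [l1_restr, l1_restr, Finset.sum_add_sum_compl, l1]

lemma l2_restr_le (S : Finset (Fin m)) (v : Fin m → ℝ) : l2 (restr S v) ≤ l2 v := by
  rw [l2_restr, l2]
  exact Real.sqrt_le_sqrt <|
    Finset.sum_le_sum_of_subset_of_nonneg (Finset.subset_univ S) fun _ _ _ => sq_nonneg _

lemma l1_restr_le_sqrt_card_mul_l2_restr (S : Finset (Fin m)) (v : Fin m → ℝ) :
    l1 (restr S v) ≤ Real.sqrt (S.card : ℝ) * l2 (restr S v) := by
  rw [l1_restr, l2_restr, ← Real.sqrt_mul (Nat.cast_nonneg _)]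
  apply Real.le_sqrt_of_sq_le
  simpa only [sq_abs] using sq_sum_le_card_mul_sum_sq (s := S) (f := fun j => |v j|)

lemma l0_restr_le_card (S : Finset (Fin m)) (v : Fin m → ℝ) : l0 (restr S v) ≤ S.card := by
  refine Finset.card_le_card fun j hj => ?_
  by_contra hjS
  simp [restr, hjS] at hj

lemma l2_restr_sub_self (S : Finset (Fin m)) (v : Fin m → ℝ) :
    l2 (fun j => restr S v j - v j) = l2 (restr Sᶜ v) := by
  unfold l2
  congr 1
  refine Finset.sum_congr rfl fun j _ => ?_
  by_cases hj : j ∈ S <;> simp [restr, hj]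

end Norms

section Cone

variable {m : ℕ} {S : Finset (Fin m)}

lemma cone1_mono {t t' : ℝ} (h : t ≤ t') : cone1 S t ⊆ cone1 S t' :=
  fun _ hv => hv.trans (mul_le_mul_of_nonneg_right h (l1_nonneg _))

lemma l1_le_of_mem_cone1 {t : ℝ} {v : Fin m → ℝ} (hv : v ∈ cone1 S t) :
    l1 v ≤ (1 + t) * l1 (restr S v) := by
  have hv : l1 (restr Sᶜ v) ≤ t * l1 (restr S v) := hv
  linarith [l1_restr_add_l1_restr_compl S v]

lemma l1_le_sqrt_card_mul_l2_of_mem_cone1 {t : ℝ} (ht : 0 ≤ t) {v : Fin m → ℝ}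
    (hv : v ∈ cone1 S t) : l1 v ≤ (1 + t) * (Real.sqrt (S.card : ℝ) * l2 v) :=
  calc l1 v ≤ (1 + t) * l1 (restr S v) := l1_le_of_mem_cone1 hv
    _ ≤ (1 + t) * (Real.sqrt (S.card : ℝ) * l2 v) := by
      gcongr
      exact (l1_restr_le_sqrt_card_mul_l2_restr S v).trans <|
        mul_le_mul_of_nonneg_left (l2_restr_le S v) (Real.sqrt_nonneg _)

end Cone

section SparseApproximation

lemma exists_finset_card_eq_forall_le {ι β : Type*} [Fintype ι] [LinearOrder β] (w : ι → β)
    {s : ℕ} (hs : s ≤ Fintype.card ι) :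
    ∃ S : Finset ι, S.card = s ∧ ∀ i ∈ S, ∀ j ∉ S, w j ≤ w i := by
  induction s with
  | zero => exact ⟨∅, rfl, by simp⟩
  | succ n ih =>
    obtain ⟨S, hScard, htop⟩ := ih (Nat.le_of_succ_le hs)
    have hne : Sᶜ.Nonempty := by
      rw [← Finset.card_pos, Finset.card_compl, hScard]
      omega
    obtain ⟨j, hjS, hjmax⟩ := Finset.exists_max_image Sᶜ w hne
    rw [Finset.mem_compl] at hjS
    refine ⟨insert j S, by rw [Finset.card_insert_of_notMem hjS, hScard], fun i hi k hk => ?_⟩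
    have hkS : k ∉ S := fun h => hk (Finset.mem_insert_of_mem h)
    rcases Finset.mem_insert.1 hi with rfl | hiS
    · exact hjmax k (Finset.mem_compl.2 hkS)
    · exact htop i hiS k hkS

variable {m : ℕ}

lemma sum_compl_sq_le_of_forall_abs_le {s : ℕ} (hs : 1 ≤ s) (v : Fin m → ℝ)
    {S : Finset (Fin m)} (hScard : S.card = s) (htop : ∀ i ∈ S, ∀ j ∉ S, |v j| ≤ |v i|) :
    ∑ j ∈ Sᶜ, v j ^ 2 ≤ l1 v ^ 2 / (4 * s) := by
  obtain ⟨i₀, hi₀S, hi₀min⟩ :=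
    Finset.exists_min_image S (fun i => |v i|) (Finset.card_pos.1 (by omega))
  set α := |v i₀|
  have hhead : s * α ≤ ∑ i ∈ S, |v i| := by
    simpa [hScard] using Finset.card_nsmul_le_sum S (fun i => |v i|) α hi₀min
  have htail : ∑ j ∈ Sᶜ, v j ^ 2 ≤ α * ∑ j ∈ Sᶜ, |v j| := by
    rw [Finset.mul_sum]
    refine Finset.sum_le_sum fun j hj => ?_
    rw [← sq_abs, sq]
    exact mul_le_mul_of_nonneg_right (htop i₀ hi₀S j (Finset.mem_compl.1 hj)) (abs_nonneg _)
  have hsplit : ∑ i ∈ S, |v i| + ∑ j ∈ Sᶜ, |v j| = l1 v := by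
    rw [← l1_restr, ← l1_restr, l1_restr_add_l1_restr_compl]
  have hrest : α * ∑ j ∈ Sᶜ, |v j| ≤ α * (l1 v - s * α) :=
    mul_le_mul_of_nonneg_left (by linarith) (abs_nonneg _)
  have hs₀ : (0 : ℝ) < s := by exact_mod_cast hs
  rw [le_div_iff₀ (by positivity)]
  nlinarith [sq_nonneg (l1 v - 2 * s * α)]

lemma exists_l0_le_l2_sub_le_l1_div {s : ℕ} (hs : 1 ≤ s) (v : Fin m → ℝ) :
    ∃ w : Fin m → ℝ, l0 w ≤ s ∧ l2 (fun j => w j - v j) ≤ l1 v / (2 * Real.sqrt s) := by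
  by_cases hms : m ≤ s
  · refine ⟨v, (Finset.card_filter_le _ _).trans (by simpa using hms), ?_⟩
    simpa [l2] using div_nonneg (l1_nonneg v) (by positivity)
  obtain ⟨S, hScard, htop⟩ :=
    exists_finset_card_eq_forall_le (fun j => |v j|) (s := s) (by rw [Fintype.card_fin]; omega)
  refine ⟨restr S v, hScard ▸ l0_restr_le_card S v, ?_⟩
  rw [l2_restr_sub_self, l2_restr, ← Real.sqrt_sq (l1_nonneg v), ← Real.sqrt_sq zero_le_two,
    ← Real.sqrt_mul (sq_nonneg _), ← Real.sqrt_div (sq_nonneg _)]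
  refine Real.sqrt_le_sqrt ((sum_compl_sq_le_of_forall_abs_le hs v hScard htop).trans_eq ?_)
  ring

lemma exists_sparse_approx_of_mem_cone1 {S : Finset (Fin m)} {t : ℝ} (ht : 0 ≤ t)
    {v : Fin m → ℝ} (hv : v ∈ cone1 S t) {s : ℕ} (hs : 1 ≤ s) :
    ∃ w : Fin m → ℝ, l0 w ≤ s ∧
      l2 (fun j => w j - v j) ≤ ((1 + t) / 2) * Real.sqrt ((S.card : ℝ) / s) * l2 v := by
  obtain ⟨w, hw₀, hw⟩ := exists_l0_le_l2_sub_le_l1_div hs v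
  refine ⟨w, hw₀, hw.trans ?_⟩
  have hs₀ : (0 : ℝ) < Real.sqrt s := Real.sqrt_pos.2 (by exact_mod_cast hs)
  calc l1 v / (2 * Real.sqrt s)
      ≤ (1 + t) * (Real.sqrt (S.card : ℝ) * l2 v) / (2 * Real.sqrt s) := by
        gcongr
        exact l1_le_sqrt_card_mul_l2_of_mem_cone1 ht hv
    _ = ((1 + t) / 2) * Real.sqrt ((S.card : ℝ) / s) * l2 v := by
        rw [Real.sqrt_div (Nat.cast_nonneg _)]
        field_simp

end SparseApproximation

section Matrix

lemma l1_restr_mulVec_le {m n : ℕ} (M : Matrix (Fin m) (Fin n) ℝ) (T : Finset (Fin m))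
    (x : Fin n → ℝ) : l1 (restr T (M.mulVec x)) ≤ ∑ k, (∑ j ∈ T, |M j k|) * |x k| :=
  calc l1 (restr T (M.mulVec x)) = ∑ j ∈ T, |∑ k, M j k * x k| := l1_restr T _
    _ ≤ ∑ j ∈ T, ∑ k, |M j k| * |x k| := by
      gcongr with j
      exact (Finset.abs_sum_le_sum_abs _ _).trans_eq (Finset.sum_congr rfl fun k _ => abs_mul _ _)
    _ = ∑ k, (∑ j ∈ T, |M j k|) * |x k| := by
      rw [Finset.sum_comm]
      simp only [Finset.sum_mul]

lemma l1_restr_compl_mulVec_le {m n : ℕ} {M : Matrix (Fin m) (Fin n) ℝ} {S : Finset (Fin m)}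
    {ϑ a : ℝ} (hcols : ∀ k, (fun j => M j k) ∈ cone1 S ϑ) (hϑ : 0 ≤ ϑ)
    (ha : ∀ k, ∑ j ∈ S, |M j k| ≤ a) (x : Fin n → ℝ) :
    l1 (restr Sᶜ (M.mulVec x)) ≤ ϑ * a * l1 x :=
  calc l1 (restr Sᶜ (M.mulVec x)) ≤ ∑ k, (∑ j ∈ Sᶜ, |M j k|) * |x k| := l1_restr_mulVec_le M Sᶜ x
    _ ≤ ∑ k, ϑ * a * |x k| := by
      gcongr with k
      have hk : l1 (restr Sᶜ fun j => M j k) ≤ ϑ * l1 (restr S fun j => M j k) := hcols k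
      rw [l1_restr, l1_restr] at hk
      exact hk.trans (mul_le_mul_of_nonneg_left (ha k) hϑ)
    _ = ϑ * a * l1 x := by rw [← Finset.mul_sum, l1]

variable {m : ℕ}

def compatibilityConstant (M : Matrix (Fin m) (Fin m) ℝ) (J : Finset (Fin m)) (t : ℝ) : ℝ :=
  sInf {c : ℝ | ∃ u ∈ cone1 J t, restr J u ≠ 0 ∧
    c = Real.sqrt (J.card : ℝ) * l2 (restr J (M.mulVec u)) / l1 (restr J u)}

lemma compatibilityConstant_mul_l1_restr_le (M : Matrix (Fin m) (Fin m) ℝ) {J : Finset (Fin m)}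
    {t : ℝ} {u : Fin m → ℝ} (hu : u ∈ cone1 J t) :
    compatibilityConstant M J t * l1 (restr J u) ≤
      Real.sqrt (J.card : ℝ) * l2 (restr J (M.mulVec u)) := by
  have hrhs : 0 ≤ Real.sqrt (J.card : ℝ) * l2 (restr J (M.mulVec u)) :=
    mul_nonneg (Real.sqrt_nonneg _) (l2_nonneg _)
  rcases (l1_nonneg (restr J u)).eq_or_lt with h0 | hpos
  · rwa [← h0, mul_zero]
  have hne : restr J u ≠ 0 := fun h => hpos.ne' (by simp [h, l1])
  rw [← le_div_iff₀ hpos]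
  refine csInf_le ⟨0, ?_⟩ ⟨u, hu, hne, rfl⟩
  rintro _ ⟨w, -, -, rfl⟩
  exact div_nonneg (mul_nonneg (Real.sqrt_nonneg _) (l2_nonneg _)) (l1_nonneg _)

lemma mulVec_mem_cone1 {M : Matrix (Fin m) (Fin m) ℝ} {J : Finset (Fin m)} (hJ : J.Nonempty)
    {ϑ ϑx κ C : ℝ} (hcols : ∀ k, (fun j => M j k) ∈ cone1 J ϑ) (hϑ : 0 ≤ ϑ) (hϑx : 0 ≤ ϑx)
    (hκ : 0 < κ) (hκle : κ ≤ compatibilityConstant M J ϑx) (hC0 : 0 ≤ C)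
    (hC : ∀ k, Real.sqrt (J.card : ℝ) * (∑ j ∈ J, |M j k|) / κ ≤ C)
    {x : Fin m → ℝ} (hx : x ∈ cone1 J ϑx) :
    M.mulVec x ∈ cone1 J (ϑ * ((1 + ϑx) * C)) := by
  set v := M.mulVec x
  have hJ₀ : 0 < Real.sqrt (J.card : ℝ) := Real.sqrt_pos.2 (by exact_mod_cast hJ.card_pos)
  have hcompat : l1 (restr J x) ≤ Real.sqrt (J.card : ℝ) * l2 (restr J v) / κ := by
    rw [le_div_iff₀ hκ, mul_comm]
    exact (mul_le_mul_of_nonneg_right hκle (l1_nonneg _)).trans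
      (compatibilityConstant_mul_l1_restr_le M hx)
  have ha : ∀ k, ∑ j ∈ J, |M j k| ≤ C * κ / Real.sqrt (J.card : ℝ) := fun k => by
    rw [le_div_iff₀ hJ₀, mul_comm, ← div_le_iff₀ hκ]
    exact hC k
  show l1 (restr Jᶜ v) ≤ ϑ * ((1 + ϑx) * C) * l1 (restr J v)
  calc l1 (restr Jᶜ v) ≤ ϑ * (C * κ / Real.sqrt (J.card : ℝ)) * l1 x :=
        l1_restr_compl_mulVec_le hcols hϑ ha x
    _ ≤ ϑ * (C * κ / Real.sqrt (J.card : ℝ)) *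
          ((1 + ϑx) * (Real.sqrt (J.card : ℝ) * l2 (restr J v) / κ)) := by
        gcongr
        exact (l1_le_of_mem_cone1 hx).trans (by gcongr)
    _ = ϑ * ((1 + ϑx) * C) * l2 (restr J v) := by field_simp
    _ ≤ ϑ * ((1 + ϑx) * C) * l1 (restr J v) := by gcongr; exact l2_le_l1 _

end Matrix

theorem sparse_approx_compatibility_general
    (d : ℕ) (M : Matrix (Fin d) (Fin d) ℝ)
    (J : Finset (Fin d)) (hJ : J.Nonempty) (ϑ ϑx : ℝ) (hϑ : 0 ≤ ϑ) (hϑx : 0 ≤ ϑx)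
    (hcols : ∀ k, (fun j => M j k) ∈ cone1 J ϑ)
    (x : Fin d → ℝ) (hxcone : x ∈ cone1 J ϑx)
    (κmin : ℝ)
    (hκ : κmin = sInf {c : ℝ | ∃ u ∈ cone1 J ϑx, restr J u ≠ 0 ∧
        c = Real.sqrt (J.card : ℝ) * l2 (restr J (M.mulVec u)) / l1 (restr J u)})
    (hκpos : 0 < κmin)
    (KJx : ℝ)
    (hK : KJx = (1 + ϑx) * sSup (Set.range fun k : Fin d =>
        Real.sqrt (J.card : ℝ) * (∑ j ∈ J, |M j k|) / κmin)) :
    M.mulVec x ∈ cone1 J ((1 + ϑ) * KJx) ∧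
    ∀ s : ℕ, 1 ≤ s → ∃ ℓt : Fin d → ℝ, l0 ℓt ≤ s ∧
      l2 (fun j => ℓt j - M.mulVec x j)
        ≤ ((1 + (1 + ϑ) * KJx) / 2) * Real.sqrt ((J.card : ℝ) / (s : ℝ)) * l2 (M.mulVec x) := by
  set colMass := Set.range fun k : Fin d => Real.sqrt (J.card : ℝ) * (∑ j ∈ J, |M j k|) / κmin
  have hC : ∀ k, Real.sqrt (J.card : ℝ) * (∑ j ∈ J, |M j k|) / κmin ≤ sSup colMass :=
    fun k => le_csSup (Set.finite_range _).bddAbove ⟨k, rfl⟩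
  have hC0 : 0 ≤ sSup colMass := Real.sSup_nonneg <| by
    rintro _ ⟨k, rfl⟩
    positivity
  have hK0 : 0 ≤ KJx := hK ▸ by positivity
  have hcone : M.mulVec x ∈ cone1 J ((1 + ϑ) * KJx) := cone1_mono (by rw [hK]; nlinarith) <|
    mulVec_mem_cone1 hJ hcols hϑ hϑx hκpos hκ.le hC0 hC hxcone
  exact ⟨hcone, fun s hs => exists_sparse_approx_of_mem_cone1 (by positivity) hcone hs⟩

/-- sparse approximation of `Mx` under columnwise cone structure and a
compatibility condition. -/
theorem sparse_approx_compatibility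
    (d : ℕ) (hd : 1 ≤ d) (M : Matrix (Fin d) (Fin d) ℝ)
    (J : Finset (Fin d)) (hJ : J.Nonempty) (ϑ ϑx : ℝ) (hϑ : 0 ≤ ϑ) (hϑx : 0 ≤ ϑx)
    (hcols : ∀ k, (fun j => M j k) ∈ cone1 J ϑ)
    (x : Fin d → ℝ) (hx : x ≠ 0) (hxcone : x ∈ cone1 J ϑx)
    (κmin : ℝ)
    (hκ : κmin = sInf {c : ℝ | ∃ u ∈ cone1 J ϑx, restr J u ≠ 0 ∧
        c = Real.sqrt (J.card : ℝ) * l2 (restr J (M.mulVec u)) / l1 (restr J u)})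
    (hκpos : 0 < κmin)
    (KJx : ℝ)
    (hK : KJx = (1 + ϑx) * sSup (Set.range fun k : Fin d =>
        Real.sqrt (J.card : ℝ) * (∑ j ∈ J, |M j k|) / κmin)) :
    M.mulVec x ∈ cone1 J ((1 + ϑ) * KJx) ∧
    ∀ s : ℕ, 1 ≤ s → ∃ ℓt : Fin d → ℝ, l0 ℓt ≤ s ∧
      l2 (fun j => ℓt j - M.mulVec x j)
        ≤ ((1 + (1 + ϑ) * KJx) / 2) * Real.sqrt ((J.card : ℝ) / (s : ℝ)) * l2 (M.mulVec x) :=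
  sparse_approx_compatibility_general d M J hJ ϑ ϑx hϑ hϑx hcols x hxcone κmin hκ hκpos KJx hK
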